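/- arXiv:0903.2462 — 2 statements merged into one kernel-verified Lean document; each statement's English description precedes it below -/
import Mathlib

section
/- Let F be a set of nonzero polynomials in the function ring F_K over a field K. Then F is a right standard basis of ideal_r(F) if and only if for every tuple (t, f₁,…,f_k, m₁,…,m_k) with f_i ∈ F, m_i monomials, HT(f_i * m_i) = t for all i, and Σ_{i=1}^k HM(f_i * m_i) = 0, the polynomial Σ_{i=1}^k f_i * m_i has a right standard representation with respect to F. -/
variable {K T : Type*} [Field K] [LinearOrder T] [Nonempty T]

/-- The head term: the largest element of the support (junk value at `0`). -/
noncomputable def HT (f : T →₀ K) : T :=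
  if h : f.support.Nonempty then f.support.max' h else Classical.arbitrary T

/-- The head term as an element of `WithBot T` (`⊥` for the zero function). -/
def HTb (f : T →₀ K) : WithBot T := f.support.max

/-- The head coefficient. -/
noncomputable def HC (f : T →₀ K) : K := f (HT f)

/-- The head monomial. -/
noncomputable def HM (f : T →₀ K) : T →₀ K := Finsupp.single (HT f) (HC f)

/-- A monomial: a function of the form `α · t` with `α ≠ 0`. -/
def IsMonomial (m : T →₀ K) : Prop :=
  ∃ (t : T) (α : K), α ≠ 0 ∧ m = Finsupp.single t α

/-- The data of a function ring over the field `K` with set of terms `T`: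
an associative, distributive multiplication on `T →₀ K` compatible with
scalar multiplication. -/
structure FRMul (K T : Type*) [Field K] [LinearOrder T] where
  mul : (T →₀ K) → (T →₀ K) → (T →₀ K)
  mul_assoc : ∀ f g h, mul (mul f g) h = mul f (mul g h)
  left_distrib : ∀ f g h, mul f (g + h) = mul f g + mul f h
  right_distrib : ∀ f g h, mul (f + g) h = mul f h + mul g h
  smul_mul : ∀ (a : K) (f g : T →₀ K), mul (a • f) g = a • mul f g
  mul_smul : ∀ (a : K) (f g : T →₀ K), mul f (a • g) = a • mul f g

/-- The right ideal generated by `F`: finite sums `∑ fᵢ * hᵢ` with `fᵢ ∈ F`. -/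
def rIdeal (M : FRMul K T) (F : Set (T →₀ K)) : Set (T →₀ K) :=
  {g | ∃ (n : ℕ) (fs hs : Fin n → (T →₀ K)),
    (∀ i, fs i ∈ F) ∧ g = ∑ i, M.mul (fs i) (hs i)}

/-- A right standard representation of `g` in terms of `F`. -/
def RightStdRep (M : FRMul K T) (F : Set (T →₀ K)) (g : T →₀ K) : Prop :=
  ∃ (n : ℕ) (fs ms : Fin n → (T →₀ K)),
    (∀ i, fs i ∈ F) ∧ (∀ i, IsMonomial (ms i)) ∧
    g = ∑ i, M.mul (fs i) (ms i) ∧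
    ∀ i, HTb (M.mul (fs i) (ms i)) ≤ HTb g

/-
Write every element of the ideal as a sum of products `f * m` with `f ∈ F` and `m` a monomial, and
induct on the largest head term `t` of a summand. If the summands with head term `t` do not cancel
there, the representation is already standard. If they do cancel, they form a critical situation;
replacing their sum by its standard representation gives a representation of the same element whose
largest head term is below `t`.
-/

omit [Nonempty T] in
theorem apply_eq_zero_of_HTb_lt {f : T →₀ K} {t : T} (h : HTb f < t) : f t = 0 := by
  by_contra ht
  exact (Finset.le_max (Finsupp.mem_support_iff.2 ht)).not_gt h

omit [Nonempty T] in
theorem HTb_add_le (f g : T →₀ K) : HTb (f + g) ≤ max (HTb f) (HTb g) :=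
  (Finset.max_mono Finsupp.support_add).trans_eq Finset.max_union

omit [Nonempty T] in
theorem HTb_neg (f : T →₀ K) : HTb (-f) = HTb f := by
  rw [HTb, HTb, Finsupp.support_neg]

omit [Nonempty T] in
theorem HTb_multiset_sum_le {s : Multiset (T →₀ K)} {b : WithBot T}
    (h : ∀ f ∈ s, HTb f ≤ b) : HTb s.sum ≤ b := by
  induction s using Multiset.induction_on with
  | empty => simp [HTb]
  | cons f s ih =>
    rw [Multiset.sum_cons]
    exact (HTb_add_le _ _).trans <| max_le (h f (Multiset.mem_cons_self f s))
      (ih fun g hg => h g (Multiset.mem_cons_of_mem hg))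

theorem HT_eq_of_HTb_eq_coe {f : T →₀ K} {t : T} (h : HTb f = t) : HT f = t := by
  have hne : f.support.Nonempty := ⟨t, Finset.mem_of_max h⟩
  rw [HT, dif_pos hne]
  exact WithBot.coe_injective ((Finset.coe_max' hne).trans h)

theorem HM_eq_single_of_HTb_eq_coe {f : T →₀ K} {t : T} (h : HTb f = t) :
    HM f = Finsupp.single t (f t) := by
  rw [HM, HC, HT_eq_of_HTb_eq_coe h]

theorem sum_HM_eq_single_apply_sum {ι : Type*} {s : Finset ι} {x : ι → T →₀ K} {t : T}
    (h : ∀ i ∈ s, HTb (x i) = t) :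
    ∑ i ∈ s, HM (x i) = Finsupp.single t ((∑ i ∈ s, x i) t) := by
  rw [Finsupp.finsetSum_apply, Finsupp.single_finsetSum]
  exact Finset.sum_congr rfl fun i hi => HM_eq_single_of_HTb_eq_coe (h i hi)

theorem Multiset.sup_lt_iff {α : Type*} [LinearOrder α] [OrderBot α] {s : Multiset α} {a : α}
    (ha : ⊥ < a) : s.sup < a ↔ ∀ b ∈ s, b < a := by
  induction s using Multiset.induction_on with
  | empty => simpa using ha
  | cons b s ih => simp [ih]

omit [Nonempty T] in
theorem FRMul.sum_mul_single (M : FRMul K T) (f h : T →₀ K) :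
    ∑ t ∈ h.support, M.mul f (Finsupp.single t (h t)) = M.mul f h := by
  calc ∑ t ∈ h.support, M.mul f (Finsupp.single t (h t))
      = M.mul f (∑ t ∈ h.support, Finsupp.single t (h t)) :=
        (map_sum (AddMonoidHom.mk' (M.mul f) (M.left_distrib f)) _ _).symm
    _ = M.mul f h := congrArg (M.mul f) h.sum_single

namespace FRMul

variable (M : FRMul K T)

/-- A representation `∑ fᵢ * mᵢ` is encoded as the multiset of its pairs `(fᵢ, mᵢ)`. -/
noncomputable def repSum (s : Multiset ((T →₀ K) × (T →₀ K))) : T →₀ K :=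
  (s.map fun p => M.mul p.1 p.2).sum

def repTop (s : Multiset ((T →₀ K) × (T →₀ K))) : WithBot T :=
  (s.map fun p => HTb (M.mul p.1 p.2)).sup

omit [Nonempty T] in
theorem repSum_add (s₁ s₂ : Multiset ((T →₀ K) × (T →₀ K))) :
    M.repSum (s₁ + s₂) = M.repSum s₁ + M.repSum s₂ := by
  simp only [repSum, Multiset.map_add, Multiset.sum_add]

omit [Nonempty T] in
theorem repSum_eq_sum_toList (s : Multiset ((T →₀ K) × (T →₀ K))) :
    M.repSum s = ∑ i : Fin s.toList.length, M.mul s.toList[i.1].1 s.toList[i.1].2 := by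
  rw [Fin.sum_univ_fun_getElem s.toList fun p => M.mul p.1 p.2, Multiset.sum_map_toList, repSum]

omit [Nonempty T] in
theorem repTop_add (s₁ s₂ : Multiset ((T →₀ K) × (T →₀ K))) :
    M.repTop (s₁ + s₂) = max (M.repTop s₁) (M.repTop s₂) := by
  simp only [repTop, Multiset.map_add, Multiset.sup_add]

omit [Nonempty T] in
theorem HTb_le_repTop {s : Multiset ((T →₀ K) × (T →₀ K))}
    {p : (T →₀ K) × (T →₀ K)} (hp : p ∈ s) : HTb (M.mul p.1 p.2) ≤ M.repTop s :=
  Multiset.le_sup (Multiset.mem_map_of_mem _ hp)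

omit [Nonempty T] in
theorem repTop_lt_coe_iff {s : Multiset ((T →₀ K) × (T →₀ K))} {t : T} :
    M.repTop s < t ↔ ∀ p ∈ s, HTb (M.mul p.1 p.2) < t := by
  simp only [repTop, Multiset.sup_lt_iff (WithBot.bot_lt_coe t), Multiset.forall_mem_map_iff]

omit [Nonempty T] in
theorem HTb_repSum_le_repTop (s : Multiset ((T →₀ K) × (T →₀ K))) :
    HTb (M.repSum s) ≤ M.repTop s :=
  HTb_multiset_sum_le fun _ hf => by
    obtain ⟨p, hp, rfl⟩ := Multiset.mem_map.1 hf
    exact M.HTb_le_repTop hp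

end FRMul

def IsMonomialRep (F : Set (T →₀ K)) (s : Multiset ((T →₀ K) × (T →₀ K))) : Prop :=
  ∀ p ∈ s, p.1 ∈ F ∧ IsMonomial p.2

omit [Nonempty T] in
theorem exists_isMonomialRep_of_mem_rIdeal {M : FRMul K T} {F : Set (T →₀ K)} {g : T →₀ K}
    (hg : g ∈ rIdeal M F) : ∃ s, IsMonomialRep F s ∧ M.repSum s = g := by
  obtain ⟨n, fs, hs, hF, rfl⟩ := hg
  refine ⟨Finset.univ.val.bind fun i =>
    (hs i).support.val.map fun t => (fs i, Finsupp.single t (hs i t)), ?_, ?_⟩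
  · intro p hp
    obtain ⟨i, -, hp⟩ := Multiset.mem_bind.1 hp
    obtain ⟨t, ht, rfl⟩ := Multiset.mem_map.1 hp
    exact ⟨hF i, t, hs i t, Finsupp.mem_support_iff.1 ht, rfl⟩
  · simp only [FRMul.repSum, Multiset.map_bind, Multiset.sum_bind, Multiset.map_map,
      Function.comp_def]
    exact Finset.sum_congr rfl fun i _ => M.sum_mul_single (fs i) (hs i)

section Representations

variable {M : FRMul K T} {F : Set (T →₀ K)}

omit [Nonempty T] in
theorem rightStdRep_repSum_of_repTop_le {s : Multiset ((T →₀ K) × (T →₀ K))}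
    (hs : IsMonomialRep F s) (h : M.repTop s ≤ HTb (M.repSum s)) : RightStdRep M F (M.repSum s) :=
  have hmem (i : Fin s.toList.length) : s.toList[i.1] ∈ s :=
    Multiset.mem_toList.1 (List.getElem_mem _)
  ⟨_, fun i => s.toList[i.1].1, fun i => s.toList[i.1].2, fun i => (hs _ (hmem i)).1,
    fun i => (hs _ (hmem i)).2, M.repSum_eq_sum_toList s,
    fun i => (M.HTb_le_repTop (hmem i)).trans h⟩

omit [Nonempty T] in
theorem RightStdRep.exists_isMonomialRep {g : T →₀ K} (h : RightStdRep M F g) :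
    ∃ s, IsMonomialRep F s ∧ M.repSum s = g ∧ M.repTop s ≤ HTb g := by
  obtain ⟨n, fs, ms, hF, hm, rfl, hle⟩ := h
  refine ⟨Finset.univ.val.map fun i => (fs i, ms i), ?_, ?_, ?_⟩
  · simp only [IsMonomialRep, Multiset.forall_mem_map_iff]
    exact fun i _ => ⟨hF i, hm i⟩
  · simp only [FRMul.repSum, Multiset.map_map, Function.comp_def]
    rfl
  · simp only [FRMul.repTop, Multiset.map_map, Function.comp_def, Multiset.sup_le,
      Multiset.forall_mem_map_iff]
    exact fun i _ => hle i

def CriticalSituationsHaveStdRep (M : FRMul K T) (F : Set (T →₀ K)) : Prop :=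
  ∀ (k : ℕ) (t : T) (fs ms : Fin k → (T →₀ K)),
    (∀ i, fs i ∈ F) → (∀ i, IsMonomial (ms i)) →
    (∀ i, HTb (M.mul (fs i) (ms i)) = (t : WithBot T)) →
    (∑ i, HM (M.mul (fs i) (ms i))) = 0 →
    RightStdRep M F (∑ i, M.mul (fs i) (ms i))

namespace CriticalSituationsHaveStdRep

variable (crit : CriticalSituationsHaveStdRep M F)
include crit

theorem rightStdRep_repSum_of_HTb_eq {s : Multiset ((T →₀ K) × (T →₀ K))} {t : T}
    (hs : IsMonomialRep F s) (htop : ∀ p ∈ s, HTb (M.mul p.1 p.2) = t)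
    (hlt : HTb (M.repSum s) < t) : RightStdRep M F (M.repSum s) := by
  have hmem (i : Fin s.toList.length) : s.toList[i.1] ∈ s :=
    Multiset.mem_toList.1 (List.getElem_mem _)
  rw [M.repSum_eq_sum_toList] at hlt ⊢
  refine crit _ t _ _ (fun i => (hs _ (hmem i)).1) (fun i => (hs _ (hmem i)).2)
    (fun i => htop _ (hmem i)) ?_
  rw [sum_HM_eq_single_apply_sum fun i _ => htop _ (hmem i), apply_eq_zero_of_HTb_lt hlt,
    Finsupp.single_zero]

theorem exists_isMonomialRep_repTop_lt {s : Multiset ((T →₀ K) × (T →₀ K))}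
    (hs : IsMonomialRep F s) (hlt : HTb (M.repSum s) < M.repTop s) :
    ∃ s', IsMonomialRep F s' ∧ M.repSum s' = M.repSum s ∧ M.repTop s' < M.repTop s := by
  obtain ⟨t, ht⟩ := WithBot.ne_bot_iff_exists.1 (ne_bot_of_gt hlt)
  rw [← ht] at hlt ⊢
  set top := s.filter fun p => HTb (M.mul p.1 p.2) = t
  set low := s.filter fun p => HTb (M.mul p.1 p.2) ≠ t
  have hsplit : M.repSum top + M.repSum low = M.repSum s := by
    rw [← M.repSum_add, Multiset.filter_add_not]
  have hlow : M.repTop low < t := M.repTop_lt_coe_iff.2 fun p hp => by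
    rw [Multiset.mem_filter] at hp
    exact lt_of_le_of_ne (ht ▸ M.HTb_le_repTop hp.1) hp.2
  have htop : HTb (M.repSum top) < t := by
    rw [← add_sub_cancel_right (M.repSum top) (M.repSum low), hsplit, sub_eq_add_neg]
    exact (HTb_add_le _ _).trans_lt
      (max_lt hlt ((HTb_neg _).trans_lt ((M.HTb_repSum_le_repTop low).trans_lt hlow)))
  obtain ⟨s₀, hs₀, hsum₀, hle₀⟩ := (crit.rightStdRep_repSum_of_HTb_eq
    (fun p hp => hs p (Multiset.mem_of_mem_filter hp)) (fun p hp => (Multiset.mem_filter.1 hp).2)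
    htop).exists_isMonomialRep
  refine ⟨s₀ + low, fun p hp => ?_, by rw [M.repSum_add, hsum₀, hsplit], ?_⟩
  · rcases Multiset.mem_add.1 hp with hp | hp
    · exact hs₀ p hp
    · exact hs p (Multiset.mem_of_mem_filter hp)
  · rw [M.repTop_add]
    exact max_lt (hle₀.trans_lt htop) hlow

theorem rightStdRep_repSum [WellFoundedLT T] {s : Multiset ((T →₀ K) × (T →₀ K))}
    (hs : IsMonomialRep F s) : RightStdRep M F (M.repSum s) := by
  induction hb : M.repTop s using WellFoundedLT.induction generalizing s with
  | _ b ih =>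
    rcases (M.HTb_repSum_le_repTop s).eq_or_lt with heq | hlt
    · exact rightStdRep_repSum_of_repTop_le hs heq.ge
    · obtain ⟨s', hs', hsum, hlt'⟩ := crit.exists_isMonomialRep_repTop_lt hs hlt
      rw [← hsum]
      exact ih _ (hb ▸ hlt') hs' rfl

end CriticalSituationsHaveStdRep

end Representations

theorem rightStdBasis_iff_critical_situations_general
    (hwf : WellFounded ((· < ·) : T → T → Prop))
    (M : FRMul K T) (F : Set (T →₀ K)) :
    (∀ g ∈ rIdeal M F, RightStdRep M F g) ↔
      ∀ (k : ℕ) (t : T) (fs ms : Fin k → (T →₀ K)),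
        (∀ i, fs i ∈ F) → (∀ i, IsMonomial (ms i)) →
        (∀ i, HTb (M.mul (fs i) (ms i)) = (t : WithBot T)) →
        (∑ i, HM (M.mul (fs i) (ms i))) = 0 →
        RightStdRep M F (∑ i, M.mul (fs i) (ms i)) := by
  have : WellFoundedLT T := ⟨hwf⟩
  refine ⟨fun h k t fs ms hF _ _ _ => h _ ⟨k, fs, ms, hF, rfl⟩, fun crit g hg => ?_⟩
  obtain ⟨s, hs, rfl⟩ := exists_isMonomialRep_of_mem_rIdeal hg
  exact CriticalSituationsHaveStdRep.rightStdRep_repSum crit hs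

/-- `F` is a right standard basis of the right ideal it generates if and only if
for every critical situation `(t, f₁, …, f_k, m₁, …, m_k)` — `fᵢ ∈ F`, `mᵢ`
monomials with `HT (fᵢ * mᵢ) = t` and `∑ HM (fᵢ * mᵢ) = 0` — the polynomial
`∑ fᵢ * mᵢ` has a right standard representation in terms of `F`. -/
theorem rightStdBasis_iff_critical_situations
    (hwf : WellFounded ((· < ·) : T → T → Prop))
    (M : FRMul K T) (F : Set (T →₀ K)) (hF : ∀ f ∈ F, f ≠ 0) :
    (∀ g ∈ rIdeal M F, RightStdRep M F g) ↔
      ∀ (k : ℕ) (t : T) (fs ms : Fin k → (T →₀ K)),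
        (∀ i, fs i ∈ F) → (∀ i, IsMonomial (ms i)) →
        (∀ i, HTb (M.mul (fs i) (ms i)) = (t : WithBot T)) →
        (∑ i, HM (M.mul (fs i) (ms i))) = 0 →
        RightStdRep M F (∑ i, M.mul (fs i) (ms i)) :=
  rightStdBasis_iff_critical_situations_general hwf M F
end

section
/- Let G ⊆ F_K \ {0} be a set of polynomials in a function ring over a field. Then G is a right Gröbner basis (the reduction relation →_{r,G} is confluent and its reflexive-symmetric-transitive closure equals the right ideal congruence) if and only if every element g of the right ideal generated by G satisfies g →*_{r,G} 0. -/
variable {K T : Type*} [Field K] [LinearOrder T] [Nonempty T]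

/-- A right reductive restriction `≥` of the term ordering: a partial ordering
contained in `⪰` and compatible with right multiplication in the sense that if
`t₂ ≥ t₁`, `t₁ ≻ t` and `t₂ = HT (t₁ * w)`, then `t₂ ≻ t * w`. -/
structure RROrder (K T : Type*) [Field K] [LinearOrder T] [Nonempty T]
    (M : FRMul K T) where
  geq : T → T → Prop
  refl : ∀ t, geq t t
  trans : ∀ {a b c}, geq a b → geq b c → geq a c
  antisymm : ∀ {a b}, geq a b → geq b a → a = b
  le_of_geq : ∀ {t s}, geq t s → s ≤ t
  compat : ∀ {t t₁ t₂ w : T}, geq t₂ t₁ → t < t₁ →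
    HTb (M.mul (Finsupp.single t₁ (1 : K)) (Finsupp.single w (1 : K))) = (t₂ : WithBot T) →
    ∀ s ∈ (M.mul (Finsupp.single t (1 : K)) (Finsupp.single w (1 : K))).support, s < t₂

/-- Right reduction: `f` right reduces `p` to `q` at the monomial `p t · t` if
there is a monomial `m` with `HT (f * m) = HT (HT f * m) = t ≥ HT f` and
`HM (f * m) = p t · t`, and `q = p - f * m`. -/
def RRed (M : FRMul K T) (O : RROrder K T M) (f p q : T →₀ K) : Prop :=
  f ≠ 0 ∧ ∃ t ∈ p.support, ∃ m : T →₀ K, IsMonomial m ∧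
    HTb (M.mul f m) = (t : WithBot T) ∧
    HTb (M.mul (Finsupp.single (HT f) (1 : K)) m) = (t : WithBot T) ∧
    O.geq t (HT f) ∧
    HM (M.mul f m) = Finsupp.single t (p t) ∧
    q = p - M.mul f m

/-- Right reduction by a set of polynomials. -/
def RRedSet (M : FRMul K T) (O : RROrder K T M) (F : Set (T →₀ K)) (p q : T →₀ K) : Prop :=
  ∃ f ∈ F, RRed M O f p q

/-- Confluence of a relation. -/
def Confluent {A : Type*} (r : A → A → Prop) : Prop :=
  ∀ a b c : A, Relation.ReflTransGen r a b → Relation.ReflTransGen r a c →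
    ∃ d, Relation.ReflTransGen r b d ∧ Relation.ReflTransGen r c d


/-!
The heart of the matter is the translation lemma: if `p - q →* 0` then `p` and `q` have a
common reduct. A reduction step of `p - q` at a term `t` subtracts a multiple `f * m` whose head
monomial is determined by `t` alone, so `p` and `q` can each be reduced at `t` by a rescaled copy
of `f * m`, and the difference of the two results is the reduct of `p - q`.

If every element of the right ideal reduces to `0`, the translation lemma makes any two
ideal-congruent polynomials joinable; this gives both the description of the congruence and
confluence, since two reducts of one polynomial are ideal-congruent. Conversely, under confluence
an ideal element, being congruent to `0`, has a common reduct with `0`, and `0` is irreducible.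
-/

open Relation

theorem Confluent.eqvGen_le_join {A : Type*} {r : A → A → Prop} (h : Confluent r) :
    EqvGen r ≤ Join (ReflTransGen r) :=
  fun a b hab => (equivalence_join h).eqvGen_iff.mp <|
    EqvGen.mono (fun _ y hxy => ⟨y, .single hxy, .refl⟩) a b hab

section rIdeal

omit [Nonempty T]

variable (M : FRMul K T) {F : Set (T →₀ K)}

theorem FRMul.mul_neg (f h : T →₀ K) : M.mul f (-h) = -M.mul f h := by
  simpa using M.mul_smul (-1 : K) f h

theorem zero_mem_rIdeal : (0 : T →₀ K) ∈ rIdeal M F :=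
  ⟨0, Fin.elim0, Fin.elim0, fun i => i.elim0, by simp⟩

theorem mul_mem_rIdeal {f : T →₀ K} (hf : f ∈ F) (m : T →₀ K) :
    M.mul f m ∈ rIdeal M F :=
  ⟨1, fun _ => f, fun _ => m, fun _ => hf, by simp⟩

variable {M}

theorem add_mem_rIdeal {a b : T →₀ K} (ha : a ∈ rIdeal M F) (hb : b ∈ rIdeal M F) :
    a + b ∈ rIdeal M F := by
  obtain ⟨n, fs, hs, hfs, rfl⟩ := ha
  obtain ⟨n', fs', hs', hfs', rfl⟩ := hb
  refine ⟨n + n', Fin.addCases fs fs', Fin.addCases hs hs', fun i => ?_, ?_⟩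
  · induction i using Fin.addCases <;> simp [hfs, hfs']
  · simp [Fin.sum_univ_add]

theorem neg_mem_rIdeal {a : T →₀ K} (ha : a ∈ rIdeal M F) : -a ∈ rIdeal M F := by
  obtain ⟨n, fs, hs, hfs, rfl⟩ := ha
  exact ⟨n, fs, fun i => -hs i, hfs, by simp [M.mul_neg]⟩

theorem sub_mem_rIdeal {a b : T →₀ K} (ha : a ∈ rIdeal M F) (hb : b ∈ rIdeal M F) :
    a - b ∈ rIdeal M F := by
  simpa [sub_eq_add_neg] using add_mem_rIdeal ha (neg_mem_rIdeal hb)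

end rIdeal

section RightReduction

variable {M : FRMul K T} {O : RROrder K T M} {G : Set (T →₀ K)}

omit [Nonempty T] in
theorem HTb_smul {β : K} (hβ : β ≠ 0) (g : T →₀ K) : HTb (β • g) = HTb g := by
  rw [HTb, HTb, Finsupp.support_smul_eq hβ]

theorem HM_smul {β : K} (hβ : β ≠ 0) (g : T →₀ K) : HM (β • g) = β • HM g := by
  rw [HM, HM, HC, HC, HT, HT, Finsupp.support_smul_eq hβ, Finsupp.smul_single]
  simp

theorem RRedSet.sub_mem_rIdeal {p q : T →₀ K} (h : RRedSet M O G p q) :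
    p - q ∈ rIdeal M G := by
  obtain ⟨f, hfG, -, -, -, m, -, -, -, -, -, rfl⟩ := h
  simpa using mul_mem_rIdeal M hfG m

theorem sub_mem_rIdeal_of_eqvGen {p q : T →₀ K} (h : EqvGen (RRedSet M O G) p q) :
    p - q ∈ rIdeal M G := by
  induction h with
  | rel p q hpq => exact hpq.sub_mem_rIdeal
  | refl p => simpa using zero_mem_rIdeal M
  | symm p q _ ih => simpa using neg_mem_rIdeal ih
  | trans p q r _ _ ih₁ ih₂ => simpa using add_mem_rIdeal ih₁ ih₂

theorem eq_zero_of_reflTransGen_zero {x : T →₀ K} (h : ReflTransGen (RRedSet M O G) 0 x) :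
    x = 0 := by
  rcases ReflTransGen.cases_head_iff.mp h with rfl | ⟨y, ⟨f, -, -, t, ht, -⟩, -⟩
  · rfl
  · simp at ht

/-- A reduction step at `t` by `f * m` with `HM (f * m) = c · t` can be replayed, rescaled, on any
`x` to cancel its coefficient at `t`. -/
theorem reflTransGen_sub_smul_mul {f m : T →₀ K} {t : T} {c : K} (hfG : f ∈ G) (hf : f ≠ 0)
    (hm : IsMonomial m) (hHT : HTb (M.mul f m) = (t : WithBot T))
    (hHT' : HTb (M.mul (Finsupp.single (HT f) (1 : K)) m) = (t : WithBot T))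
    (hgeq : O.geq t (HT f)) (hHM : HM (M.mul f m) = Finsupp.single t c) (hc : c ≠ 0)
    (x : T →₀ K) : ReflTransGen (RRedSet M O G) x (x - (x t / c) • M.mul f m) := by
  by_cases hx : x t = 0
  · simpa [hx] using ReflTransGen.refl
  have hβ : x t / c ≠ 0 := div_ne_zero hx hc
  refine .single ⟨f, hfG, hf, t, Finsupp.mem_support_iff.mpr hx, (x t / c) • m, ?_, ?_, ?_,
    hgeq, ?_, by rw [M.mul_smul]⟩
  · obtain ⟨s, α, hα, rfl⟩ := hm
    exact ⟨s, x t / c * α, mul_ne_zero hβ hα, Finsupp.smul_single' _ _ _⟩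
  · rw [M.mul_smul, HTb_smul hβ, hHT]
  · rw [M.mul_smul, HTb_smul hβ, hHT']
  · rw [M.mul_smul, HM_smul hβ, hHM, Finsupp.smul_single, smul_eq_mul, div_mul_cancel₀ _ hc]

theorem join_of_reflTransGen_sub_zero {p q : T →₀ K}
    (h : ReflTransGen (RRedSet M O G) (p - q) 0) : Join (ReflTransGen (RRedSet M O G)) p q := by
  generalize hw : p - q = w at h
  induction h using ReflTransGen.head_induction_on generalizing p q with
  | refl => exact sub_eq_zero.mp hw ▸ ⟨p, .refl, .refl⟩
  | head hstep _ ih =>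
    obtain ⟨f, hfG, hf, t, ht, m, hm, hHT, hHT', hgeq, hHM, rfl⟩ := hstep
    subst hw
    have hc : (p - q) t ≠ 0 := Finsupp.mem_support_iff.mp ht
    have hreduct : (p - (p t / (p - q) t) • M.mul f m) - (q - (q t / (p - q) t) • M.mul f m) =
        p - q - M.mul f m := by
      rw [sub_sub_sub_comm, ← sub_smul, div_sub_div_same, ← Finsupp.sub_apply, div_self hc,
        one_smul]
    obtain ⟨d, hpd, hqd⟩ := ih hreduct
    exact ⟨d, (reflTransGen_sub_smul_mul hfG hf hm hHT hHT' hgeq hHM hc p).trans hpd,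
      (reflTransGen_sub_smul_mul hfG hf hm hHT hHT' hgeq hHM hc q).trans hqd⟩

end RightReduction

theorem rightGB_iff_red_to_zero_general
    (M : FRMul K T) (O : RROrder K T M)
    (G : Set (T →₀ K)) :
    ((∀ p q : T →₀ K, Relation.EqvGen (RRedSet M O G) p q ↔ p - q ∈ rIdeal M G) ∧
        Confluent (RRedSet M O G)) ↔
      ∀ g ∈ rIdeal M G, Relation.ReflTransGen (RRedSet M O G) g 0 := by
  constructor
  · rintro ⟨hcongr, hconf⟩ g hg
    obtain ⟨d, hgd, h0d⟩ := hconf.eqvGen_le_join g 0 ((hcongr g 0).mpr (by simpa using hg))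
    rwa [eq_zero_of_reflTransGen_zero h0d] at hgd
  · intro hzero
    have join_of_mem {p q : T →₀ K} (h : p - q ∈ rIdeal M G) :
        Join (ReflTransGen (RRedSet M O G)) p q :=
      join_of_reflTransGen_sub_zero (hzero _ h)
    refine ⟨fun p q => ⟨sub_mem_rIdeal_of_eqvGen, fun h => ?_⟩, fun a b c hab hac => ?_⟩
    · exact join_le_of_equivalence_of_le (EqvGen.is_equivalence _)
        (EqvGen.reflTransGen_le_eqvGen _) p q (join_of_mem h)
    · have sub_mem_of_reduct {x : T →₀ K} (hx : ReflTransGen (RRedSet M O G) a x) :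
          a - x ∈ rIdeal M G :=
        sub_mem_rIdeal_of_eqvGen (EqvGen.reflTransGen_le_eqvGen _ a x hx)
      have hbc : b - c ∈ rIdeal M G := by
        simpa using sub_mem_rIdeal (sub_mem_of_reduct hac) (sub_mem_of_reduct hab)
      exact join_of_mem hbc

/-- A set `G` of nonzero polynomials is a right Gröbner basis (the
reflexive-symmetric-transitive closure of right reduction by `G` equals the
right ideal congruence and right reduction by `G` is confluent) if and only if
every element of the right ideal generated by `G` right reduces to `0`. -/
theorem rightGB_iff_red_to_zero
    (hwf : WellFounded ((· < ·) : T → T → Prop))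
    (M : FRMul K T) (O : RROrder K T M)
    (G : Set (T →₀ K)) (hG : ∀ g ∈ G, g ≠ 0) :
    ((∀ p q : T →₀ K, Relation.EqvGen (RRedSet M O G) p q ↔ p - q ∈ rIdeal M G) ∧
        Confluent (RRedSet M O G)) ↔
      ∀ g ∈ rIdeal M G, Relation.ReflTransGen (RRedSet M O G) g 0 :=
  rightGB_iff_red_to_zero_general M O G
end
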